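/- For the language L_n = { wa ∈ 𝔸* | a does not occur in w } ∪ {ε} over an infinite alphabet 𝔸, and distinct letters a₁, …, a_k, the derivatives form a strictly decreasing chain: L_n ⊋ a₁⁻¹L_n ⊋ (a₁a₂)⁻¹L_n ⊋ ⋯ ⊋ (a₁⋯a_k)⁻¹L_n. -/

import Mathlib

/-- The derivative of a language with respect to a word: `u⁻¹L = {w | uw ∈ L}`. -/
def lderiv {σ : Type*} (L : Set (List σ)) (u : List σ) : Set (List σ) :=
  {w | u ++ w ∈ L}

/-- The language "the last letter is unique": `{wa | a does not occur in w} ∪ {ε}`. -/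
def Ln (𝔸 : Type*) : Set (List 𝔸) :=
  {x | ∃ (w : List 𝔸) (a : 𝔸), x = w ++ [a] ∧ a ∉ w} ∪ {[]}

/-!
The word `[a]` lies in `u⁻¹Lₙ` exactly when `a ∉ u`, so the last letter `aᵢ₊₁` of
`a₁⋯aᵢ₊₁` separates the two derivatives. Conversely, a non-empty word `wb` in
`(uv)⁻¹Lₙ` has `b ∉ uvw`, hence `b ∉ uw`, and the empty word lies in both derivatives
because `a₁⋯aᵢ` is duplicate-free.
-/

namespace Ln

variable {𝔸 : Type*}

theorem append_singleton_mem_iff {w : List 𝔸} {b : 𝔸} : w ++ [b] ∈ Ln 𝔸 ↔ b ∉ w := by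
  refine ⟨?_, fun hb => Or.inl ⟨w, b, rfl, hb⟩⟩
  rintro (⟨v, c, heq, hc⟩ | hnil)
  · obtain ⟨rfl, hbc⟩ := List.append_inj' heq rfl
    simpa using (List.singleton_inj.mp hbc).symm ▸ hc
  · simp at hnil

theorem mem_of_nodup {x : List 𝔸} (hx : x.Nodup) : x ∈ Ln 𝔸 := by
  rcases x.eq_nil_or_concat with rfl | ⟨w, b, rfl⟩
  · exact Or.inr rfl
  · rw [List.concat_eq_append]
    exact append_singleton_mem_iff.mpr ((List.nodup_concat w b).mp hx).1

theorem singleton_mem_lderiv_iff {u : List 𝔸} {a : 𝔸} : [a] ∈ lderiv (Ln 𝔸) u ↔ a ∉ u :=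
  append_singleton_mem_iff

theorem lderiv_append_subset {u : List 𝔸} (hu : u ∈ Ln 𝔸) (v : List 𝔸) :
    lderiv (Ln 𝔸) (u ++ v) ⊆ lderiv (Ln 𝔸) u := by
  intro x hx
  rcases x.eq_nil_or_concat with rfl | ⟨w, b, rfl⟩
  · simpa [lderiv] using hu
  · simp only [lderiv, Set.mem_ofPred_eq, List.concat_eq_append, ← List.append_assoc,
      append_singleton_mem_iff, List.mem_append, not_or] at hx ⊢
    exact ⟨hx.1.1, hx.2⟩

theorem lderiv_append_ssubset {u v : List 𝔸} {a : 𝔸} (hu : u ∈ Ln 𝔸) (hau : a ∉ u)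
    (hav : a ∈ v) : lderiv (Ln 𝔸) (u ++ v) ⊂ lderiv (Ln 𝔸) u := by
  refine Set.ssubset_iff_subset_ne.mpr ⟨lderiv_append_subset hu v, fun h => ?_⟩
  have hsep : [a] ∈ lderiv (Ln 𝔸) (u ++ v) := h ▸ singleton_mem_lderiv_iff.mpr hau
  exact singleton_mem_lderiv_iff.mp hsep (List.mem_append_right u hav)

end Ln

theorem stmt14_general {𝔸 : Type*} (l : List 𝔸) (hl : l.Nodup) :
    ∀ i < l.length, lderiv (Ln 𝔸) (l.take (i + 1)) ⊂ lderiv (Ln 𝔸) (l.take i) := by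
  intro i hi
  have hsplit : l.take (i + 1) = l.take i ++ [l[i]] := (List.take_concat_get' l i hi).symm
  have hnodup : (l.take i ++ [l[i]]).Nodup := hsplit ▸ hl.sublist (List.take_sublist _ _)
  rw [← List.concat_eq_append, List.nodup_concat] at hnodup
  rw [hsplit]
  exact Ln.lderiv_append_ssubset (Ln.mem_of_nodup hnodup.2) hnodup.1 (List.mem_singleton_self _)

/-- for pairwise distinct letters `a₁, …, a_k` (given as a duplicate-free
list `l`), the derivatives form a strictly decreasing chain
`Lₙ ⊋ a₁⁻¹Lₙ ⊋ (a₁a₂)⁻¹Lₙ ⊋ ⋯ ⊋ (a₁⋯a_k)⁻¹Lₙ`. -/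
theorem stmt14 {𝔸 : Type*} [Infinite 𝔸] (l : List 𝔸) (hl : l.Nodup) :
    ∀ i < l.length, lderiv (Ln 𝔸) (l.take (i + 1)) ⊂ lderiv (Ln 𝔸) (l.take i) :=
  stmt14_general l hl
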